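/- arXiv:2404.10850 — 2 statements merged into one kernel-verified Lean document; each statement's English description precedes it below -/
import Mathlib

section
/- An order-n input/output model and an order-n̂ input/output model with n̂ > n are equivalent (produce identical outputs for all inputs and identical shared initial conditions) if and only if 𝓕̂_{n,n̂-n} = 𝓕_{n,n̂-n} and 𝓖̂_{n,n̂-n} = 𝓖_{n,n̂-n}, equivalently if and only if [-𝓕̂_{n̂}, 𝓖̂_{n̂}] M_{n,n̂} = [-𝓕_{n,n̂-n}, 𝓖_{n,n̂-n}]. -/
open Finset Matrix

noncomputable def calF {p : ℕ} (F : ℕ → Matrix (Fin p) (Fin p) ℝ) (n : ℕ) :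
    ℕ → ℕ → Matrix (Fin p) (Fin p) ℝ
  | 0 => fun i => F i
  | (j+1) => fun i =>
      (if j + 1 + i ≤ n then F (j + 1 + i) else 0)
        - ∑ t ∈ Finset.range (min (j+1) n), F (t+1) * calF F n (j - t) i
  decreasing_by omega

noncomputable def calG {p m : ℕ} (F : ℕ → Matrix (Fin p) (Fin p) ℝ)
    (G : ℕ → Matrix (Fin p) (Fin m) ℝ) (n : ℕ) :
    ℕ → ℕ → Matrix (Fin p) (Fin m) ℝ
  | 0 => fun i => G i
  | (j+1) => fun i =>
      (if i ≤ n then G i else 0)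
        - ∑ t ∈ Finset.range (min (j+1) n),
            F (t+1) * (if t + 1 ≤ i then calG F G n (j - t) (i - (t+1)) else 0)
  decreasing_by omega

/-- The order-`n` input/output recurrence holding from time `k0`. -/
def IORec {p m : ℕ} (n : ℕ) (F : ℕ → Matrix (Fin p) (Fin p) ℝ)
    (G : ℕ → Matrix (Fin p) (Fin m) ℝ) (u : ℕ → Fin m → ℝ) (y : ℕ → Fin p → ℝ)
    (k0 : ℕ) : Prop :=
  ∀ k, k0 ≤ k →
    y (k + n) = -(∑ i ∈ Finset.Icc 1 n, F i *ᵥ y (k + n - i))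
      + ∑ i ∈ Finset.range (n+1), G i *ᵥ u (k + n - i)

/-- Equivalence of an order-`n` model and an order-`nh` model (`n ≤ nh`). -/
def IOEquiv {p m : ℕ} (n : ℕ) (F : ℕ → Matrix (Fin p) (Fin p) ℝ)
    (G : ℕ → Matrix (Fin p) (Fin m) ℝ) (nh : ℕ)
    (Fh : ℕ → Matrix (Fin p) (Fin p) ℝ) (Gh : ℕ → Matrix (Fin p) (Fin m) ℝ) : Prop :=
  ∀ k0 : ℕ, ∀ u : ℕ → Fin m → ℝ, ∀ y yh : ℕ → Fin p → ℝ,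
    IORec n F G u y k0 →
    (∀ k, k0 ≤ k → k < k0 + nh → yh k = y k) →
    IORec nh Fh Gh u yh k0 →
    ∀ k, k0 + nh ≤ k → yh k = y k

/-- 𝓕̂_{n,n̂-n}, block i (for 1 ≤ i ≤ n). -/
noncomputable def calFhat {p : ℕ} (F Fh : ℕ → Matrix (Fin p) (Fin p) ℝ) (n nh : ℕ)
    (i : ℕ) : Matrix (Fin p) (Fin p) ℝ :=
  Fh (nh - n + i) - ∑ t ∈ Finset.range (nh - n), Fh (t+1) * calF F n (nh - n - (t+1)) i

/-- 𝓖̂_{n,n̂-n}, block i (for 0 ≤ i ≤ n̂). -/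
noncomputable def calGhat {p m : ℕ} (F Fh : ℕ → Matrix (Fin p) (Fin p) ℝ)
    (G Gh : ℕ → Matrix (Fin p) (Fin m) ℝ) (n nh : ℕ) (i : ℕ) :
    Matrix (Fin p) (Fin m) ℝ :=
  Gh i - ∑ t ∈ Finset.range (nh - n),
    Fh (t+1) * (if t + 1 ≤ i then calG F G n (nh - n - (t+1)) (i - (t+1)) else 0)

/-- The matrix M_{n,n̂}: top block [M¹ M²] built from the output-transition
coefficients of the order-n model, over an identity block. Rows are indexed by
blocks of φ_{n̂,k} (p·n̂ output entries then m·(n̂+1) input entries), columns by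
blocks of φ_{n,n̂,k}. -/
noncomputable def Mmat {p m : ℕ} (F : ℕ → Matrix (Fin p) (Fin p) ℝ)
    (G : ℕ → Matrix (Fin p) (Fin m) ℝ) (n nh : ℕ) :
    Matrix ((Fin nh × Fin p) ⊕ (Fin (nh+1) × Fin m))
           ((Fin n × Fin p) ⊕ (Fin (nh+1) × Fin m)) ℝ :=
  Matrix.of fun rIdx cIdx =>
    match rIdx, cIdx with
    | .inl (j, r), .inl (i, c) =>
        if (j : ℕ) < nh - n then -(calF F n (nh - n - ((j : ℕ)+1)) ((i : ℕ)+1) r c)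
        else if (j : ℕ) - (nh - n) = (i : ℕ) ∧ r = c then 1 else 0
    | .inl (j, r), .inr (i, c) =>
        if (j : ℕ) < nh - n then
          (if (j : ℕ) + 1 ≤ (i : ℕ) then
            calG F G n (nh - n - ((j : ℕ)+1)) ((i : ℕ) - ((j : ℕ)+1)) r c
          else 0)
        else 0
    | .inr _, .inl _ => 0
    | .inr (i, c), .inr (i', c') => if i = i' ∧ c = c' then 1 else 0

/-- The row-block matrix [-𝓕̂_{n̂}  𝓖̂_{n̂}] of the order-n̂ model coefficients. -/
noncomputable def ThetaRow {p m : ℕ} (Fh : ℕ → Matrix (Fin p) (Fin p) ℝ)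
    (Gh : ℕ → Matrix (Fin p) (Fin m) ℝ) (nh : ℕ) :
    Matrix (Fin p) ((Fin nh × Fin p) ⊕ (Fin (nh+1) × Fin m)) ℝ :=
  Matrix.of fun r idx =>
    match idx with
    | .inl (i, c) => -(Fh ((i : ℕ)+1) r c)
    | .inr (i, c) => Gh (i : ℕ) r c

lemma sumMV {p q : ℕ} {ι : Type*} (s : Finset ι) (A : ι → Matrix (Fin p) (Fin q) ℝ)
    (v : Fin q → ℝ) : (∑ i ∈ s, A i) *ᵥ v = ∑ i ∈ s, A i *ᵥ v := by
  ext r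
  simp only [Matrix.mulVec, dotProduct, Finset.sum_apply, Matrix.sum_apply,
    Finset.sum_mul]
  exact Finset.sum_comm

lemma mvSum {p q : ℕ} {ι : Type*} (s : Finset ι) (A : Matrix (Fin p) (Fin q) ℝ)
    (v : ι → Fin q → ℝ) : A *ᵥ (∑ i ∈ s, v i) = ∑ i ∈ s, A *ᵥ v i := by
  ext r
  simp only [Matrix.mulVec, dotProduct, Finset.sum_apply, Finset.mul_sum]
  exact Finset.sum_comm

lemma keyL {p m : ℕ} (n : ℕ) (F : ℕ → Matrix (Fin p) (Fin p) ℝ)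
    (G : ℕ → Matrix (Fin p) (Fin m) ℝ) (u : ℕ → Fin m → ℝ) (y : ℕ → Fin p → ℝ)
    (k0 : ℕ) (hy : IORec n F G u y k0) :
    ∀ j k, k0 ≤ k →
      y (k + n + j) = -(∑ i ∈ Finset.Icc 1 n, calF F n j i *ᵥ y (k + n - i))
        + ∑ i ∈ Finset.range (n + j + 1), calG F G n j i *ᵥ u (k + n + j - i) := by
  intro j
  induction j using Nat.strong_induction_on with
  | _ j IH =>
    match j with
    | 0 =>
      intro k hk
      have := hy k hk
      simpa [calF, calG] using this

    | (j+1) =>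
      intro k hk
      have h0 := hy (k + (j+1)) (le_trans hk (Nat.le_add_right _ _))
      rw [show k + (j+1) + n = k + n + (j+1) by omega] at h0
      rw [h0]
      set mu := min (j+1) n with hmu
      -- abbreviations
      have hRF : ∑ i ∈ Finset.Icc 1 n, calF F n (j+1) i *ᵥ y (k + n - i)
          = (∑ i ∈ Finset.Icc 1 n, (if j+1+i ≤ n then F (j+1+i) else 0) *ᵥ y (k+n-i))
            - ∑ i ∈ Finset.Icc 1 n, ∑ t ∈ Finset.range mu,
                (F (t+1) * calF F n (j-t) i) *ᵥ y (k+n-i) := by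
        have hc : ∀ i, calF F n (j+1) i = (if j+1+i ≤ n then F (j+1+i) else 0)
            - ∑ t ∈ Finset.range mu, F (t+1) * calF F n (j-t) i := fun i => by rw [calF]
        simp only [hc, Matrix.sub_mulVec, sumMV, Finset.sum_sub_distrib]
      have hRG : ∑ i ∈ Finset.range (n+(j+1)+1), calG F G n (j+1) i *ᵥ u (k+n+(j+1)-i)
          = (∑ i ∈ Finset.range (n+(j+1)+1), (if i ≤ n then G i else 0) *ᵥ u (k+n+(j+1)-i))
            - ∑ i ∈ Finset.range (n+(j+1)+1), ∑ t ∈ Finset.range mu,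
                (F (t+1) * (if t+1 ≤ i then calG F G n (j-t) (i-(t+1)) else 0)) *ᵥ u (k+n+(j+1)-i) := by
        have hc : ∀ i, calG F G n (j+1) i = (if i ≤ n then G i else 0)
            - ∑ t ∈ Finset.range mu,
                F (t+1) * (if t+1 ≤ i then calG F G n (j-t) (i-(t+1)) else 0) := fun i => by rw [calG]
        simp only [hc, Matrix.sub_mulVec, sumMV, Finset.sum_sub_distrib]
      have hTA : (∑ i ∈ Finset.Icc 1 n, (if j+1+i ≤ n then F (j+1+i) else 0) *ᵥ y (k+n-i))
          = ∑ i ∈ Finset.Icc (j+2) n, F i *ᵥ y (k+n+(j+1)-i) := by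
        rw [show (∑ i ∈ Finset.Icc 1 n, (if j+1+i ≤ n then F (j+1+i) else 0) *ᵥ y (k+n-i))
            = ∑ i ∈ Finset.Icc 1 n, (if j+1+i ≤ n then F (j+1+i) *ᵥ y (k+n-i) else 0) from
          Finset.sum_congr rfl fun i _ => by split_ifs <;> simp [Matrix.zero_mulVec]]
        rw [← Finset.sum_filter]
        refine Finset.sum_nbij' (fun i => j+1+i) (fun i => i - (j+1)) ?_ ?_ ?_ ?_ ?_
        · intro a ha; simp only [Finset.mem_filter, Finset.mem_Icc] at ha ⊢; omega
        · intro a ha; simp only [Finset.mem_filter, Finset.mem_Icc] at ha ⊢; omega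
        · intro a _; omega
        · intro a ha; simp only [Finset.mem_Icc] at ha; omega
        · intro a ha; simp only [Finset.mem_filter, Finset.mem_Icc] at ha
          show F (j+1+a) *ᵥ y (k+n-a) = F (j+1+a) *ᵥ y (k+n+(j+1)-(j+1+a))
          rw [show k+n+(j+1)-(j+1+a) = k+n-a by omega]
      have hTC : (∑ i ∈ Finset.range (n+(j+1)+1), (if i ≤ n then G i else 0) *ᵥ u (k+n+(j+1)-i))
          = ∑ i ∈ Finset.range (n+1), G i *ᵥ u (k+n+(j+1)-i) := by
        rw [show (∑ i ∈ Finset.range (n+(j+1)+1), (if i ≤ n then G i else 0) *ᵥ u (k+n+(j+1)-i))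
            = ∑ i ∈ Finset.range (n+(j+1)+1), (if i ≤ n then G i *ᵥ u (k+n+(j+1)-i) else 0) from
          Finset.sum_congr rfl fun i _ => by split_ifs <;> simp [Matrix.zero_mulVec]]
        rw [← Finset.sum_filter]
        apply Finset.sum_congr _ (fun i _ => rfl)
        ext x; simp only [Finset.mem_filter, Finset.mem_range]; omega
      have hTD : (∑ i ∈ Finset.range (n+(j+1)+1), ∑ t ∈ Finset.range mu,
              (F (t+1) * (if t+1 ≤ i then calG F G n (j-t) (i-(t+1)) else 0)) *ᵥ u (k+n+(j+1)-i))
          = ∑ t ∈ Finset.range mu, ∑ s ∈ Finset.range (n+(j-t)+1),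
              (F (t+1) * calG F G n (j-t) s) *ᵥ u (k+n+(j-t)-s) := by
        rw [Finset.sum_comm]
        refine Finset.sum_congr rfl fun t ht => ?_
        have htm : t < mu := Finset.mem_range.mp ht
        have htj : t ≤ j := by omega
        have htn : t < n := by omega
        rw [show (∑ i ∈ Finset.range (n+(j+1)+1),
              (F (t+1) * (if t+1 ≤ i then calG F G n (j-t) (i-(t+1)) else 0)) *ᵥ u (k+n+(j+1)-i))
            = ∑ i ∈ Finset.range (n+(j+1)+1),
              (if t+1 ≤ i then (F (t+1) * calG F G n (j-t) (i-(t+1))) *ᵥ u (k+n+(j+1)-i) else 0) from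
          Finset.sum_congr rfl fun i _ => by split_ifs <;> simp [Matrix.zero_mulVec]]
        rw [← Finset.sum_filter]
        refine Finset.sum_nbij' (fun i => i - (t+1)) (fun s => t+1+s) ?_ ?_ ?_ ?_ ?_
        · intro a ha; simp only [Finset.mem_filter, Finset.mem_range] at ha ⊢; omega
        · intro a ha; simp only [Finset.mem_filter, Finset.mem_range] at ha ⊢; omega
        · intro a ha; simp only [Finset.mem_filter, Finset.mem_range] at ha; omega
        · intro a _; omega
        · intro a ha; simp only [Finset.mem_filter, Finset.mem_range] at ha
          show (F (t+1) * calG F G n (j-t) (a-(t+1))) *ᵥ u (k+n+(j+1)-a)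
              = (F (t+1) * calG F G n (j-t) (a-(t+1))) *ᵥ u (k+n+(j-t)-(a-(t+1)))
          rw [show k+n+(j-t)-(a-(t+1)) = k+n+(j+1)-a by omega]
      have hlow : ∑ i ∈ Finset.Icc 1 mu, F i *ᵥ y (k+n+(j+1)-i)
          = ∑ t ∈ Finset.range mu,
              (-(∑ i ∈ Finset.Icc 1 n, (F (t+1) * calF F n (j-t) i) *ᵥ y (k+n-i))
                + ∑ s ∈ Finset.range (n+(j-t)+1), (F (t+1) * calG F G n (j-t) s) *ᵥ u (k+n+(j-t)-s)) := by
        refine Finset.sum_nbij' (fun i => i - 1) (fun t => t + 1) ?_ ?_ ?_ ?_ ?_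
        · intro a ha; simp only [Finset.mem_Icc, Finset.mem_range] at ha ⊢; omega
        · intro a ha; simp only [Finset.mem_Icc, Finset.mem_range] at ha ⊢; omega
        · intro a ha; simp only [Finset.mem_Icc] at ha; omega
        · intro a _; omega
        · intro a ha
          simp only [Finset.mem_Icc] at ha
          show F a *ᵥ y (k+n+(j+1)-a)
              = -(∑ i ∈ Finset.Icc 1 n, (F ((a-1)+1) * calF F n (j-(a-1)) i) *ᵥ y (k+n-i))
                + ∑ s ∈ Finset.range (n+(j-(a-1))+1),
                    (F ((a-1)+1) * calG F G n (j-(a-1)) s) *ᵥ u (k+n+(j-(a-1))-s)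
          have h1 : a - 1 + 1 = a := by omega
          have h2 : k+n+(j+1)-a = k+n+(j-(a-1)) := by omega
          rw [h2, IH (j - (a-1)) (by omega) k hk, h1]
          rw [Matrix.mulVec_add, Matrix.mulVec_neg, mvSum, mvSum]
          congr 1
          · congr 1
            exact Finset.sum_congr rfl fun i _ => Matrix.mulVec_mulVec _ _ _
          · exact Finset.sum_congr rfl fun s _ => Matrix.mulVec_mulVec _ _ _
      have hsplit : Finset.Icc 1 n = Finset.Icc 1 mu ∪ Finset.Icc (j+2) n := by
        ext x; simp only [Finset.mem_union, Finset.mem_Icc]; omega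
      have hdisj : Disjoint (Finset.Icc 1 mu) (Finset.Icc (j+2) n) := by
        rw [Finset.disjoint_left]
        intro a ha hb; simp only [Finset.mem_Icc] at ha hb; omega
      have hLs : ∑ i ∈ Finset.Icc 1 n, F i *ᵥ y (k+n+(j+1)-i)
          = (∑ i ∈ Finset.Icc 1 mu, F i *ᵥ y (k+n+(j+1)-i))
            + ∑ i ∈ Finset.Icc (j+2) n, F i *ᵥ y (k+n+(j+1)-i) := by
        rw [hsplit, Finset.sum_union hdisj]
      have hTB : ∑ i ∈ Finset.Icc 1 n, ∑ t ∈ Finset.range mu,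
              (F (t+1) * calF F n (j-t) i) *ᵥ y (k+n-i)
          = ∑ t ∈ Finset.range mu, ∑ i ∈ Finset.Icc 1 n,
              (F (t+1) * calF F n (j-t) i) *ᵥ y (k+n-i) := Finset.sum_comm
      rw [hRF, hRG, hTA, hTC, hTD, hTB, hLs, hlow, Finset.sum_add_distrib,
        Finset.sum_neg_distrib]
      abel

lemma rhs_decomp {p m : ℕ} (n nh : ℕ) (hn : n ≤ nh)
    (F Fh : ℕ → Matrix (Fin p) (Fin p) ℝ) (G Gh : ℕ → Matrix (Fin p) (Fin m) ℝ)
    (u : ℕ → Fin m → ℝ) (y : ℕ → Fin p → ℝ) (k0 : ℕ) (hy : IORec n F G u y k0)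
    (k : ℕ) (hk : k0 ≤ k) :
    -(∑ i ∈ Finset.Icc 1 nh, Fh i *ᵥ y (k + nh - i))
        + ∑ i ∈ Finset.range (nh+1), Gh i *ᵥ u (k + nh - i)
      = -(∑ i ∈ Finset.Icc 1 n, calFhat F Fh n nh i *ᵥ y (k + n - i))
        + ∑ i ∈ Finset.range (nh+1), calGhat F Fh G Gh n nh i *ᵥ u (k + nh - i) := by
  have hRF : ∑ i ∈ Finset.Icc 1 n, calFhat F Fh n nh i *ᵥ y (k + n - i)
      = (∑ i ∈ Finset.Icc 1 n, Fh (nh-n+i) *ᵥ y (k+n-i))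
        - ∑ i ∈ Finset.Icc 1 n, ∑ t ∈ Finset.range (nh-n),
            (Fh (t+1) * calF F n (nh-n-(t+1)) i) *ᵥ y (k+n-i) := by
    simp only [calFhat, Matrix.sub_mulVec, sumMV, Finset.sum_sub_distrib]
  have hRG : ∑ i ∈ Finset.range (nh+1), calGhat F Fh G Gh n nh i *ᵥ u (k+nh-i)
      = (∑ i ∈ Finset.range (nh+1), Gh i *ᵥ u (k+nh-i))
        - ∑ i ∈ Finset.range (nh+1), ∑ t ∈ Finset.range (nh-n),
            (Fh (t+1) * (if t+1 ≤ i then calG F G n (nh-n-(t+1)) (i-(t+1)) else 0)) *ᵥ u (k+nh-i) := by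
    simp only [calGhat, Matrix.sub_mulVec, sumMV, Finset.sum_sub_distrib]
  have hTA : (∑ i ∈ Finset.Icc 1 n, Fh (nh-n+i) *ᵥ y (k+n-i))
      = ∑ i ∈ Finset.Icc (nh-n+1) nh, Fh i *ᵥ y (k+nh-i) := by
    refine Finset.sum_nbij' (fun i => nh-n+i) (fun i => i - (nh-n)) ?_ ?_ ?_ ?_ ?_
    · intro a ha; simp only [Finset.mem_Icc] at ha ⊢; omega
    · intro a ha; simp only [Finset.mem_Icc] at ha ⊢; omega
    · intro a ha; simp only [Finset.mem_Icc] at ha; omega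
    · intro a ha; simp only [Finset.mem_Icc] at ha; omega
    · intro a ha; simp only [Finset.mem_Icc] at ha
      show Fh (nh-n+a) *ᵥ y (k+n-a) = Fh (nh-n+a) *ᵥ y (k+nh-(nh-n+a))
      rw [show k+nh-(nh-n+a) = k+n-a by omega]
  have hTD : (∑ i ∈ Finset.range (nh+1), ∑ t ∈ Finset.range (nh-n),
          (Fh (t+1) * (if t+1 ≤ i then calG F G n (nh-n-(t+1)) (i-(t+1)) else 0)) *ᵥ u (k+nh-i))
      = ∑ t ∈ Finset.range (nh-n), ∑ s ∈ Finset.range (n+(nh-n-(t+1))+1),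
          (Fh (t+1) * calG F G n (nh-n-(t+1)) s) *ᵥ u (k+n+(nh-n-(t+1))-s) := by
    rw [Finset.sum_comm]
    refine Finset.sum_congr rfl fun t ht => ?_
    have htm : t < nh - n := Finset.mem_range.mp ht
    rw [show (∑ i ∈ Finset.range (nh+1),
          (Fh (t+1) * (if t+1 ≤ i then calG F G n (nh-n-(t+1)) (i-(t+1)) else 0)) *ᵥ u (k+nh-i))
        = ∑ i ∈ Finset.range (nh+1),
          (if t+1 ≤ i then (Fh (t+1) * calG F G n (nh-n-(t+1)) (i-(t+1))) *ᵥ u (k+nh-i) else 0) from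
      Finset.sum_congr rfl fun i _ => by split_ifs <;> simp [Matrix.zero_mulVec]]
    rw [← Finset.sum_filter]
    refine Finset.sum_nbij' (fun i => i - (t+1)) (fun s => t+1+s) ?_ ?_ ?_ ?_ ?_
    · intro a ha; simp only [Finset.mem_filter, Finset.mem_range] at ha ⊢; omega
    · intro a ha; simp only [Finset.mem_filter, Finset.mem_range] at ha ⊢; omega
    · intro a ha; simp only [Finset.mem_filter, Finset.mem_range] at ha; omega
    · intro a ha; simp only [Finset.mem_range] at ha; omega
    · intro a ha; simp only [Finset.mem_filter, Finset.mem_range] at ha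
      show (Fh (t+1) * calG F G n (nh-n-(t+1)) (a-(t+1))) *ᵥ u (k+nh-a)
          = (Fh (t+1) * calG F G n (nh-n-(t+1)) (a-(t+1))) *ᵥ u (k+n+(nh-n-(t+1))-(a-(t+1)))
      rw [show k+n+(nh-n-(t+1))-(a-(t+1)) = k+nh-a by omega]
  have hlow : ∑ i ∈ Finset.Icc 1 (nh-n), Fh i *ᵥ y (k+nh-i)
      = ∑ t ∈ Finset.range (nh-n),
          (-(∑ i ∈ Finset.Icc 1 n, (Fh (t+1) * calF F n (nh-n-(t+1)) i) *ᵥ y (k+n-i))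
            + ∑ s ∈ Finset.range (n+(nh-n-(t+1))+1),
                (Fh (t+1) * calG F G n (nh-n-(t+1)) s) *ᵥ u (k+n+(nh-n-(t+1))-s)) := by
    refine Finset.sum_nbij' (fun i => i - 1) (fun t => t + 1) ?_ ?_ ?_ ?_ ?_
    · intro a ha; simp only [Finset.mem_Icc, Finset.mem_range] at ha ⊢; omega
    · intro a ha; simp only [Finset.mem_Icc, Finset.mem_range] at ha ⊢; omega
    · intro a ha; simp only [Finset.mem_Icc] at ha; omega
    · intro a ha; simp only [Finset.mem_range] at ha; omega
    · intro a ha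
      simp only [Finset.mem_Icc] at ha
      show Fh a *ᵥ y (k+nh-a)
          = -(∑ i ∈ Finset.Icc 1 n, (Fh ((a-1)+1) * calF F n (nh-n-((a-1)+1)) i) *ᵥ y (k+n-i))
            + ∑ s ∈ Finset.range (n+(nh-n-((a-1)+1))+1),
                (Fh ((a-1)+1) * calG F G n (nh-n-((a-1)+1)) s) *ᵥ u (k+n+(nh-n-((a-1)+1))-s)
      have h1 : a - 1 + 1 = a := by omega
      have h2 : k+nh-a = k+n+(nh-n-a) := by omega
      rw [h1, h2, keyL n F G u y k0 hy (nh-n-a) k hk]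
      rw [Matrix.mulVec_add, Matrix.mulVec_neg, mvSum, mvSum]
      congr 1
      · congr 1
        exact Finset.sum_congr rfl fun i _ => Matrix.mulVec_mulVec _ _ _
      · exact Finset.sum_congr rfl fun s _ => Matrix.mulVec_mulVec _ _ _
  have hsplit : Finset.Icc 1 nh = Finset.Icc 1 (nh-n) ∪ Finset.Icc (nh-n+1) nh := by
    ext x; simp only [Finset.mem_union, Finset.mem_Icc]; omega
  have hdisj : Disjoint (Finset.Icc 1 (nh-n)) (Finset.Icc (nh-n+1) nh) := by
    rw [Finset.disjoint_left]
    intro a ha hb; simp only [Finset.mem_Icc] at ha hb; omega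
  have hLs : ∑ i ∈ Finset.Icc 1 nh, Fh i *ᵥ y (k+nh-i)
      = (∑ i ∈ Finset.Icc 1 (nh-n), Fh i *ᵥ y (k+nh-i))
        + ∑ i ∈ Finset.Icc (nh-n+1) nh, Fh i *ᵥ y (k+nh-i) := by
    rw [hsplit, Finset.sum_union hdisj]
  have hTB : ∑ i ∈ Finset.Icc 1 n, ∑ t ∈ Finset.range (nh-n),
          (Fh (t+1) * calF F n (nh-n-(t+1)) i) *ᵥ y (k+n-i)
      = ∑ t ∈ Finset.range (nh-n), ∑ i ∈ Finset.Icc 1 n,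
          (Fh (t+1) * calF F n (nh-n-(t+1)) i) *ᵥ y (k+n-i) := Finset.sum_comm
  rw [hRF, hRG, hTA, hTD, hTB, hLs, hlow, Finset.sum_add_distrib, Finset.sum_neg_distrib]
  abel

lemma equiv_of_coeff {p m : ℕ} (n nh : ℕ) (hn : n < nh)
    (F Fh : ℕ → Matrix (Fin p) (Fin p) ℝ) (G Gh : ℕ → Matrix (Fin p) (Fin m) ℝ)
    (hF : ∀ i, 1 ≤ i → i ≤ n → calFhat F Fh n nh i = calF F n (nh - n) i)
    (hG : ∀ i, i ≤ nh → calGhat F Fh G Gh n nh i = calG F G n (nh - n) i) :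
    IOEquiv n F G nh Fh Gh := by
  intro k0 u y yh hy hinit hyh k hk
  induction k using Nat.strong_induction_on with
  | _ k IHk =>
    have hk' : k0 ≤ k - nh := by omega
    have h0 := hyh (k - nh) hk'
    rw [show k - nh + nh = k by omega] at h0
    have hrep : ∀ i ∈ Finset.Icc 1 nh, Fh i *ᵥ yh (k - i) = Fh i *ᵥ y (k - i) := by
      intro i hi
      simp only [Finset.mem_Icc] at hi
      have hyy : yh (k - i) = y (k - i) := by
        by_cases hcase : k - i < k0 + nh
        · exact hinit _ (by omega) hcase
        · exact IHk _ (by omega) (by omega)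
      rw [hyy]
    rw [Finset.sum_congr rfl hrep] at h0
    have hd := rhs_decomp n nh hn.le F Fh G Gh u y k0 hy (k - nh) hk'
    rw [show k - nh + nh = k by omega] at hd
    rw [hd] at h0
    have hrepF : ∀ i ∈ Finset.Icc 1 n,
        calFhat F Fh n nh i *ᵥ y (k - nh + n - i)
          = calF F n (nh - n) i *ᵥ y (k - nh + n - i) := by
      intro i hi
      simp only [Finset.mem_Icc] at hi
      rw [hF i hi.1 hi.2]
    have hrepG : ∀ i ∈ Finset.range (nh+1),
        calGhat F Fh G Gh n nh i *ᵥ u (k - i)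
          = calG F G n (nh - n) i *ᵥ u (k - i) := by
      intro i hi
      simp only [Finset.mem_range] at hi
      rw [hG i (by omega)]
    rw [Finset.sum_congr rfl hrepF, Finset.sum_congr rfl hrepG] at h0
    have hkey := keyL n F G u y k0 hy (nh - n) (k - nh) hk'
    rw [show n + (nh - n) = nh by omega] at hkey
    rw [show k - nh + n + (nh - n) = k by omega] at hkey
    rw [h0, hkey]

noncomputable def buildY {p m : ℕ} (n : ℕ) (F : ℕ → Matrix (Fin p) (Fin p) ℝ)
    (G : ℕ → Matrix (Fin p) (Fin m) ℝ) (u : ℕ → Fin m → ℝ)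
    (init : ℕ → Fin p → ℝ) : ℕ → Fin p → ℝ
  | k => if k < n then init k
      else -(∑ i ∈ (Finset.Icc 1 n).attach, F i.1 *ᵥ buildY n F G u init (k - i.1))
        + ∑ i ∈ Finset.range (n+1), G i *ᵥ u (k - i)
  decreasing_by
    have h2 := Finset.mem_Icc.mp i.2
    omega

lemma buildY_lt {p m : ℕ} (n : ℕ) (F : ℕ → Matrix (Fin p) (Fin p) ℝ)
    (G : ℕ → Matrix (Fin p) (Fin m) ℝ) (u : ℕ → Fin m → ℝ)
    (init : ℕ → Fin p → ℝ) (k : ℕ) (h : k < n) :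
    buildY n F G u init k = init k := by
  rw [buildY, if_pos h]

lemma buildY_rec {p m : ℕ} (n : ℕ) (F : ℕ → Matrix (Fin p) (Fin p) ℝ)
    (G : ℕ → Matrix (Fin p) (Fin m) ℝ) (u : ℕ → Fin m → ℝ)
    (init : ℕ → Fin p → ℝ) : IORec n F G u (buildY n F G u init) 0 := by
  intro k _
  rw [buildY, if_neg (by omega)]
  congr 1
  congr 1
  rw [← Finset.sum_attach (Finset.Icc 1 n) (fun i => F i *ᵥ buildY n F G u init (k + n - i))]

lemma coeff_of_equiv {p m : ℕ} (n nh : ℕ) (hn : n < nh)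
    (F Fh : ℕ → Matrix (Fin p) (Fin p) ℝ) (G Gh : ℕ → Matrix (Fin p) (Fin m) ℝ)
    (hE : IOEquiv n F G nh Fh Gh) :
    (∀ i, 1 ≤ i → i ≤ n → calFhat F Fh n nh i = calF F n (nh - n) i) ∧
    (∀ i, i ≤ nh → calGhat F Fh G Gh n nh i = calG F G n (nh - n) i) := by
  have master : ∀ (u : ℕ → Fin m → ℝ) (init : ℕ → Fin p → ℝ),
      -(∑ i ∈ Finset.Icc 1 n, calFhat F Fh n nh i *ᵥ init (n - i))
          + ∑ i ∈ Finset.range (nh+1), calGhat F Fh G Gh n nh i *ᵥ u (nh - i)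
        = -(∑ i ∈ Finset.Icc 1 n, calF F n (nh - n) i *ᵥ init (n - i))
          + ∑ i ∈ Finset.range (nh+1), calG F G n (nh - n) i *ᵥ u (nh - i) := by
    intro u init
    set y := buildY n F G u init with hydef
    set yh := buildY nh Fh Gh u y with hyhdef
    have hy : IORec n F G u y 0 := buildY_rec n F G u init
    have hyh : IORec nh Fh Gh u yh 0 := buildY_rec nh Fh Gh u y
    have hinit : ∀ k, 0 ≤ k → k < 0 + nh → yh k = y k := fun k _ hk =>
      buildY_lt nh Fh Gh u y k (by omega)
    have heq : yh nh = y nh := hE 0 u y yh hy hinit hyh nh (by omega)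
    have h1 := hyh 0 (le_refl 0)
    rw [Nat.zero_add] at h1
    have hrep : ∀ i ∈ Finset.Icc 1 nh, Fh i *ᵥ yh (nh - i) = Fh i *ᵥ y (nh - i) := by
      intro i hi
      simp only [Finset.mem_Icc] at hi
      rw [hyhdef, buildY_lt nh Fh Gh u y (nh - i) (by omega)]
    rw [Finset.sum_congr rfl hrep] at h1
    have hd := rhs_decomp n nh hn.le F Fh G Gh u y 0 hy 0 (le_refl 0)
    rw [Nat.zero_add, Nat.zero_add] at hd
    rw [hd] at h1
    have hkey := keyL n F G u y 0 hy (nh - n) 0 (le_refl 0)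
    rw [Nat.zero_add] at hkey
    rw [show n + (nh - n) = nh by omega] at hkey
    have hrinit : ∀ i ∈ Finset.Icc 1 n,
        calFhat F Fh n nh i *ᵥ y (n - i) = calFhat F Fh n nh i *ᵥ init (n - i) := by
      intro i hi
      simp only [Finset.mem_Icc] at hi
      rw [hydef, buildY_lt n F G u init (n - i) (by omega)]
    have hrinit' : ∀ i ∈ Finset.Icc 1 n,
        calF F n (nh - n) i *ᵥ y (n - i) = calF F n (nh - n) i *ᵥ init (n - i) := by
      intro i hi
      simp only [Finset.mem_Icc] at hi
      rw [hydef, buildY_lt n F G u init (n - i) (by omega)]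
    rw [Finset.sum_congr rfl hrinit] at h1
    rw [Finset.sum_congr rfl hrinit'] at hkey
    rw [h1, hkey] at heq
    exact heq
  constructor
  · intro i0 h1 h2
    ext r c
    have hm := master 0 (fun k => if k = n - i0 then Pi.single c 1 else 0)
    simp only [Pi.zero_apply, Matrix.mulVec_zero, Finset.sum_const_zero, add_zero] at hm
    have hs : ∀ (M : ℕ → Matrix (Fin p) (Fin p) ℝ),
        (∑ i ∈ Finset.Icc 1 n, M i *ᵥ (if n - i = n - i0 then Pi.single c 1 else 0))
          = M i0 *ᵥ Pi.single c 1 := by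
      intro M
      rw [show (∑ i ∈ Finset.Icc 1 n, M i *ᵥ (if n - i = n - i0 then Pi.single c 1 else 0))
          = ∑ i ∈ Finset.Icc 1 n, (if i = i0 then M i *ᵥ Pi.single c 1 else 0) from
        Finset.sum_congr rfl fun i hi => by
          simp only [Finset.mem_Icc] at hi
          by_cases hii : i = i0
          · rw [if_pos hii, if_pos (by omega)]
          · rw [if_neg (by omega), if_neg hii, Matrix.mulVec_zero]]
      rw [Finset.sum_ite_eq' (Finset.Icc 1 n) i0, if_pos (Finset.mem_Icc.mpr ⟨h1, h2⟩)]
    rw [hs, hs] at hm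
    have := congrFun (neg_injective hm) r
    simpa [Matrix.mulVec_single] using this
  · intro i0 h2
    ext r c
    have hm := master (fun k => if k = nh - i0 then Pi.single c 1 else 0) 0
    simp only [Pi.zero_apply, Matrix.mulVec_zero, Finset.sum_const_zero, neg_zero,
      zero_add] at hm
    have hs : ∀ (M : ℕ → Matrix (Fin p) (Fin m) ℝ),
        (∑ i ∈ Finset.range (nh+1), M i *ᵥ (if nh - i = nh - i0 then Pi.single c 1 else 0))
          = M i0 *ᵥ Pi.single c 1 := by
      intro M
      rw [show (∑ i ∈ Finset.range (nh+1), M i *ᵥ (if nh - i = nh - i0 then Pi.single c 1 else 0))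
          = ∑ i ∈ Finset.range (nh+1), (if i = i0 then M i *ᵥ Pi.single c 1 else 0) from
        Finset.sum_congr rfl fun i hi => by
          simp only [Finset.mem_range] at hi
          by_cases hii : i = i0
          · rw [if_pos hii, if_pos (by omega)]
          · rw [if_neg (by omega), if_neg hii, Matrix.mulVec_zero]]
      rw [Finset.sum_ite_eq' (Finset.range (nh+1)) i0, if_pos (Finset.mem_range.mpr (by omega))]
    rw [hs, hs] at hm
    have := congrFun hm r
    simpa [Matrix.mulVec_single] using this

lemma prod_inl {p m : ℕ} (n nh : ℕ) (hn : n < nh)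
    (F Fh : ℕ → Matrix (Fin p) (Fin p) ℝ) (G Gh : ℕ → Matrix (Fin p) (Fin m) ℝ)
    (r : Fin p) (i : Fin n) (c : Fin p) :
    (ThetaRow Fh Gh nh * Mmat F G n nh) r (Sum.inl (i, c))
      = -(calFhat F Fh n nh ((i : ℕ)+1) r c) := by
  rw [Matrix.mul_apply, Fintype.sum_sum_type]
  have hz : ∑ b : Fin (nh+1) × Fin m,
      ThetaRow Fh Gh nh r (Sum.inr b) * Mmat F G n nh (Sum.inr b) (Sum.inl (i, c)) = 0 := by
    apply Finset.sum_eq_zero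
    intro b _
    simp [Mmat]
  rw [hz, add_zero, Fintype.sum_prod_type]
  have hterm : ∀ j : Fin nh, ∑ r' : Fin p,
      ThetaRow Fh Gh nh r (Sum.inl (j, r')) * Mmat F G n nh (Sum.inl (j, r')) (Sum.inl (i, c))
      = (fun jj : ℕ => if jj < nh - n
          then (Fh (jj+1) * calF F n (nh - n - (jj+1)) ((i:ℕ)+1)) r c
          else (if jj - (nh - n) = (i : ℕ) then -(Fh (jj+1) r c) else 0)) (j : ℕ) := by
    intro j
    by_cases hj : (j : ℕ) < nh - n
    · simp only [ThetaRow, Mmat, Matrix.of_apply, hj, if_pos, if_true]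
      rw [Matrix.mul_apply]
      apply Finset.sum_congr rfl
      intro r' _
      ring
    · simp only [ThetaRow, Mmat, Matrix.of_apply, hj, if_false]
      by_cases hji : (j : ℕ) - (nh - n) = (i : ℕ)
      · simp only [hji, if_pos, true_and]
        rw [Finset.sum_eq_single c]
        · simp
        · intro b _ hb
          simp [hb]
        · simp
      · simp [hji]
  rw [Finset.sum_congr rfl (fun j _ => hterm j)]
  rw [Fin.sum_univ_eq_sum_range (fun jj => if jj < nh - n
      then (Fh (jj+1) * calF F n (nh - n - (jj+1)) ((i:ℕ)+1)) r c
      else (if jj - (nh - n) = (i : ℕ) then -(Fh (jj+1) r c) else 0)) nh]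
  rw [Finset.range_eq_Ico, ← Finset.sum_Ico_consecutive _ (Nat.zero_le (nh-n)) (by omega)]
  have hp1 : ∑ j ∈ Finset.Ico 0 (nh-n), (if j < nh - n
        then (Fh (j+1) * calF F n (nh - n - (j+1)) ((i:ℕ)+1)) r c
        else (if j - (nh - n) = (i : ℕ) then -(Fh (j+1) r c) else 0))
      = ∑ j ∈ Finset.range (nh-n), (Fh (j+1) * calF F n (nh - n - (j+1)) ((i:ℕ)+1)) r c := by
    rw [← Finset.range_eq_Ico]
    apply Finset.sum_congr rfl
    intro j hj
    rw [if_pos (Finset.mem_range.mp hj)]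
  have hp2 : ∑ j ∈ Finset.Ico (nh-n) nh, (if j < nh - n
        then (Fh (j+1) * calF F n (nh - n - (j+1)) ((i:ℕ)+1)) r c
        else (if j - (nh - n) = (i : ℕ) then -(Fh (j+1) r c) else 0))
      = -(Fh (nh - n + ((i:ℕ)+1)) r c) := by
    rw [Finset.sum_eq_single_of_mem (nh - n + (i:ℕ))]
    · rw [if_neg (by omega), if_pos (by omega), show nh - n + (i:ℕ) + 1 = nh - n + ((i:ℕ)+1) by omega]
    · simp only [Finset.mem_Ico]
      have := i.2
      omega
    · intro b hb hbne
      simp only [Finset.mem_Ico] at hb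
      rw [if_neg (by omega), if_neg (by omega)]
  rw [hp1, hp2, calFhat, Matrix.sub_apply, Matrix.sum_apply]
  ring

lemma prod_inr {p m : ℕ} (n nh : ℕ) (hn : n < nh)
    (F Fh : ℕ → Matrix (Fin p) (Fin p) ℝ) (G Gh : ℕ → Matrix (Fin p) (Fin m) ℝ)
    (r : Fin p) (i : Fin (nh+1)) (c : Fin m) :
    (ThetaRow Fh Gh nh * Mmat F G n nh) r (Sum.inr (i, c))
      = calGhat F Fh G Gh n nh (i : ℕ) r c := by
  rw [Matrix.mul_apply, Fintype.sum_sum_type]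
  have hg : ∑ b : Fin (nh+1) × Fin m,
      ThetaRow Fh Gh nh r (Sum.inr b) * Mmat F G n nh (Sum.inr b) (Sum.inr (i, c))
      = Gh (i:ℕ) r c := by
    rw [Fintype.sum_prod_type, Finset.sum_eq_single i]
    · rw [Finset.sum_eq_single c]
      · simp [ThetaRow, Mmat]
      · intro b _ hb; simp [ThetaRow, Mmat, hb]
      · simp
    · intro b _ hb
      apply Finset.sum_eq_zero
      intro c' _
      simp [ThetaRow, Mmat, hb]
    · simp
  rw [hg, Fintype.sum_prod_type]
  have hterm : ∀ j : Fin nh, ∑ r' : Fin p,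
      ThetaRow Fh Gh nh r (Sum.inl (j, r')) * Mmat F G n nh (Sum.inl (j, r')) (Sum.inr (i, c))
      = (fun jj : ℕ => if jj < nh - n
          then -((Fh (jj+1) * (if jj + 1 ≤ (i:ℕ) then calG F G n (nh - n - (jj+1)) ((i:ℕ) - (jj+1)) else 0)) r c)
          else 0) (j : ℕ) := by
    intro j
    by_cases hj : (j : ℕ) < nh - n
    · simp only [ThetaRow, Mmat, Matrix.of_apply, hj, if_true]
      rw [Matrix.mul_apply, ← Finset.sum_neg_distrib]
      apply Finset.sum_congr rfl
      intro r' _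
      by_cases hc : (j:ℕ) + 1 ≤ (i:ℕ)
      · simp only [hc, if_true]
        ring
      · simp [hc]
    · simp [ThetaRow, Mmat, hj]
  rw [Finset.sum_congr rfl (fun j _ => hterm j)]
  rw [Fin.sum_univ_eq_sum_range (fun jj => if jj < nh - n
      then -((Fh (jj+1) * (if jj + 1 ≤ (i:ℕ) then calG F G n (nh - n - (jj+1)) ((i:ℕ) - (jj+1)) else 0)) r c)
      else 0) nh]
  rw [Finset.range_eq_Ico, ← Finset.sum_Ico_consecutive _ (Nat.zero_le (nh-n)) (by omega)]
  have hp2 : ∑ j ∈ Finset.Ico (nh-n) nh, (if j < nh - n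
        then -((Fh (j+1) * (if j + 1 ≤ (i:ℕ) then calG F G n (nh - n - (j+1)) ((i:ℕ) - (j+1)) else 0)) r c)
        else 0) = 0 := by
    apply Finset.sum_eq_zero
    intro j hj
    simp only [Finset.mem_Ico] at hj
    rw [if_neg (by omega)]
  have hp1 : ∑ j ∈ Finset.Ico 0 (nh-n), (if j < nh - n
        then -((Fh (j+1) * (if j + 1 ≤ (i:ℕ) then calG F G n (nh - n - (j+1)) ((i:ℕ) - (j+1)) else 0)) r c)
        else 0)
      = -∑ t ∈ Finset.range (nh-n),
          (Fh (t+1) * (if t + 1 ≤ (i:ℕ) then calG F G n (nh - n - (t+1)) ((i:ℕ) - (t+1)) else 0)) r c := by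
    rw [← Finset.range_eq_Ico, ← Finset.sum_neg_distrib]
    apply Finset.sum_congr rfl
    intro j hj
    rw [if_pos (Finset.mem_range.mp hj)]
  rw [hp1, hp2, add_zero, calGhat, Matrix.sub_apply, Matrix.sum_apply]
  ring

/-- Theorem 1: the order-n model and the order-n̂ model (n̂ > n) are
equivalent iff 𝓕̂_{n,n̂-n} = 𝓕_{n,n̂-n} and 𝓖̂_{n,n̂-n} = 𝓖_{n,n̂-n}, equivalently iff
[-𝓕̂_{n̂}  𝓖̂_{n̂}] M_{n,n̂} = [-𝓕_{n,n̂-n}  𝓖_{n,n̂-n}]. -/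
theorem equivalence_iff_coefficient_condition {p m : ℕ} (n nh : ℕ) (hn : n < nh)
    (F Fh : ℕ → Matrix (Fin p) (Fin p) ℝ) (G Gh : ℕ → Matrix (Fin p) (Fin m) ℝ) :
    (IOEquiv n F G nh Fh Gh ↔
      ((∀ i, 1 ≤ i → i ≤ n → calFhat F Fh n nh i = calF F n (nh - n) i) ∧
       (∀ i, i ≤ nh → calGhat F Fh G Gh n nh i = calG F G n (nh - n) i))) ∧
    (IOEquiv n F G nh Fh Gh ↔
      ThetaRow Fh Gh nh * Mmat F G n nh
        = Matrix.of (fun r idx =>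
            match idx with
            | .inl (i, c) => -(calF F n (nh - n) ((i : ℕ)+1) r c)
            | .inr (i, c) => calG F G n (nh - n) (i : ℕ) r c)) := by
  have hiff1 : IOEquiv n F G nh Fh Gh ↔
      ((∀ i, 1 ≤ i → i ≤ n → calFhat F Fh n nh i = calF F n (nh - n) i) ∧
       (∀ i, i ≤ nh → calGhat F Fh G Gh n nh i = calG F G n (nh - n) i)) := by
    constructor
    · exact fun h => coeff_of_equiv n nh hn F Fh G Gh h
    · exact fun h => equiv_of_coeff n nh hn F Fh G Gh h.1 h.2
  refine ⟨hiff1, ?_⟩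
  rw [hiff1]
  constructor
  · rintro ⟨hF, hG⟩
    ext r idx
    cases idx with
    | inl ic =>
      obtain ⟨i, c⟩ := ic
      rw [prod_inl n nh hn F Fh G Gh r i c]
      show -(calFhat F Fh n nh ((i:ℕ)+1) r c) = -(calF F n (nh - n) ((i:ℕ)+1) r c)
      rw [hF ((i:ℕ)+1) (by omega) (by have := i.2; omega)]
    | inr ic =>
      obtain ⟨i, c⟩ := ic
      rw [prod_inr n nh hn F Fh G Gh r i c]
      show calGhat F Fh G Gh n nh (i:ℕ) r c = calG F G n (nh - n) (i:ℕ) r c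
      rw [hG (i:ℕ) (by have := i.2; omega)]
  · intro h
    constructor
    · intro i h1 h2
      ext r c
      have h2' : -(calFhat F Fh n nh ((i-1)+1) r c) = -(calF F n (nh - n) ((i-1)+1) r c) := by
        have hc := Matrix.ext_iff.2 h r (Sum.inl (⟨i-1, by omega⟩, c))
        rwa [prod_inl n nh hn F Fh G Gh r _ c] at hc
      have h4 := neg_injective h2'
      rw [show i-1+1 = i by omega] at h4
      exact h4
    · intro i h2
      ext r c
      have hc := Matrix.ext_iff.2 h r (Sum.inr (⟨i, by omega⟩, c))
      rwa [prod_inr n nh hn F Fh G Gh r _ c] at hc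
end

section
/- Under the higher-order identification setup (data y_k = θ_true φ_{n̂,k}, regressor factorization φ_{n̂,k} = M φ_{n,n̂,k}, M full column rank), if (φ_{n,n̂,k}ᵀ)_{k≥0} is weakly persistently exciting (λ_min(Σ_{i=0}^k φ_{n,n̂,i} φ_{n,n̂,i}ᵀ) → ∞), then the RLS estimates converge: lim_{k→∞} θ_k = θ* := θ_0 + (θ_true - θ_0) M (Mᵀ P_0 M)^{-1} Mᵀ P_0. If additionally (φ_{n,n̂,k}ᵀ) is persistently exciting with limit matrix C := lim (1/k) Σ φ_{n,n̂,i} φ_{n,n̂,i}ᵀ ≻ 0, then lim_{k→∞} k (θ_k - θ*) = (θ_0 - θ_true) M W^{-1} C^{-1} W^{-1} Mᵀ P_0 with W = Mᵀ P_0 M. -/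
open Finset Matrix Filter

/-- The smallest eigenvalue of a symmetric matrix, as the infimum of the
Rayleigh quotient over the unit sphere. -/
noncomputable def lambdaMin {ι : Type*} [Fintype ι] (A : Matrix ι ι ℝ) : ℝ :=
  ⨅ v : {v : ι → ℝ // v ⬝ᵥ v = 1}, (v : ι → ℝ) ⬝ᵥ A *ᵥ (v : ι → ℝ)

/-- Weak persistent excitation: the smallest eigenvalue of the Gram sum diverges. -/
def WeaklyPE {ι : Type*} [Fintype ι] (φ : ℕ → ι → ℝ) : Prop :=
  Filter.Tendsto (fun N => lambdaMin (∑ i ∈ Finset.range (N + 1), vecMulVec (φ i) (φ i)))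
    Filter.atTop Filter.atTop

section Aux

variable {ι : Type*} [Fintype ι]

lemma RLSaux.sum_mulVec' {α : Type*} (s : Finset α) (A : α → Matrix ι ι ℝ) (x : ι → ℝ) :
    (∑ i ∈ s, A i) *ᵥ x = ∑ i ∈ s, (A i) *ᵥ x := by
  ext j
  simp only [mulVec, dotProduct, Matrix.sum_apply, Finset.sum_apply, Finset.sum_mul]
  exact Finset.sum_comm

lemma RLSaux.dot_sum' {α : Type*} (s : Finset α) (f : α → ι → ℝ) (x : ι → ℝ) :
    x ⬝ᵥ (∑ i ∈ s, f i) = ∑ i ∈ s, x ⬝ᵥ f i := by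
  simp only [dotProduct, Finset.sum_apply, Finset.mul_sum]
  exact Finset.sum_comm

lemma RLSaux.dot_vecMulVec (u x : ι → ℝ) : x ⬝ᵥ (vecMulVec u u) *ᵥ x = (u ⬝ᵥ x)^2 := by
  simp only [vecMulVec_apply, mulVec, dotProduct, Finset.mul_sum, Finset.sum_mul]
  rw [sq]
  simp only [Finset.mul_sum, Finset.sum_mul]
  apply Finset.sum_congr rfl; intro i _
  apply Finset.sum_congr rfl; intro j _
  ring

lemma RLSaux.gram_posSemidef (φ : ℕ → ι → ℝ) (s : Finset ℕ) :
    (∑ i ∈ s, vecMulVec (φ i) (φ i)).PosSemidef := by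
  rw [Matrix.posSemidef_iff_dotProduct_mulVec]
  constructor
  · unfold Matrix.IsHermitian
    rw [conjTranspose_sum]
    apply Finset.sum_congr rfl; intro i _
    ext a b; simp [vecMulVec_apply, conjTranspose_apply, mul_comm]
  · intro x
    simp only [star_trivial]
    rw [RLSaux.sum_mulVec', RLSaux.dot_sum']
    apply Finset.sum_nonneg; intro i _
    rw [RLSaux.dot_vecMulVec]; positivity

lemma RLSaux.rayleigh_lower {A : Matrix ι ι ℝ} (hA : A.PosSemidef) {c : ℝ}
    (hc : c ≤ lambdaMin A) (v : ι → ℝ) : c * (v ⬝ᵥ v) ≤ v ⬝ᵥ A *ᵥ v := by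
  have hAnn : ∀ w : ι → ℝ, 0 ≤ w ⬝ᵥ A *ᵥ w := by
    intro w; simpa using hA.dotProduct_mulVec_nonneg w
  have hbdd : BddBelow (Set.range fun v : {v : ι → ℝ // v ⬝ᵥ v = 1} =>
      (v : ι → ℝ) ⬝ᵥ A *ᵥ (v : ι → ℝ)) := by
    refine ⟨0, ?_⟩; rintro x ⟨w, rfl⟩; exact hAnn w
  rcases eq_or_ne (v ⬝ᵥ v) 0 with h0 | h0
  · rw [h0, mul_zero]; exact hAnn v
  · have hnn : 0 ≤ v ⬝ᵥ v := Finset.sum_nonneg fun i _ => mul_self_nonneg _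
    have hvv : 0 < v ⬝ᵥ v := lt_of_le_of_ne hnn (Ne.symm h0)
    set t := v ⬝ᵥ v with ht
    set u : ι → ℝ := (Real.sqrt t)⁻¹ • v with hu
    have hst : Real.sqrt t * Real.sqrt t = t := Real.mul_self_sqrt hvv.le
    have hsne : Real.sqrt t ≠ 0 := by positivity
    have huu : u ⬝ᵥ u = 1 := by
      rw [hu, smul_dotProduct, dotProduct_smul, smul_eq_mul, smul_eq_mul, ← ht]
      field_simp
      rw [sq, hst]
    have h1 : lambdaMin A ≤ u ⬝ᵥ A *ᵥ u := ciInf_le hbdd ⟨u, huu⟩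
    have h2 : u ⬝ᵥ A *ᵥ u = t⁻¹ * (v ⬝ᵥ A *ᵥ v) := by
      rw [hu, smul_dotProduct, mulVec_smul, dotProduct_smul, smul_eq_mul, smul_eq_mul,
        ← mul_assoc, ← mul_inv]
      rw [hst]
    have h3 : c ≤ t⁻¹ * (v ⬝ᵥ A *ᵥ v) := le_trans hc (h1.trans h2.le)
    calc c * t ≤ (t⁻¹ * (v ⬝ᵥ A *ᵥ v)) * t := by nlinarith
      _ = v ⬝ᵥ A *ᵥ v := by field_simp

lemma RLSaux.posDef_of_rayleigh {A : Matrix ι ι ℝ} (hA : A.PosSemidef) {c : ℝ}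
    (hcpos : 0 < c) (hc : c ≤ lambdaMin A) : A.PosDef := by
  refine Matrix.posDef_iff_dotProduct_mulVec.2 ⟨hA.1, fun x hx => ?_⟩
  simp only [star_trivial]
  have h1 := RLSaux.rayleigh_lower hA hc x
  have h2 : 0 < x ⬝ᵥ x := by
    rcases (dotProduct_self_eq_zero (v := x)).not.2 hx with h
    exact lt_of_le_of_ne (Finset.sum_nonneg fun i _ => mul_self_nonneg _) (Ne.symm h)
  calc (0:ℝ) < c * (x ⬝ᵥ x) := by positivity
    _ ≤ _ := h1

variable [DecidableEq ι]

lemma RLSaux.inv_entry_bound {A : Matrix ι ι ℝ} (hA : A.PosSemidef) {c : ℝ}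
    (hcpos : 0 < c) (hc : c ≤ lambdaMin A) (i j : ι) : |A⁻¹ i j| ≤ c⁻¹ := by
  have hPD : A.PosDef := RLSaux.posDef_of_rayleigh hA hcpos hc
  have hdet : IsUnit A.det := isUnit_iff_isUnit_det _ |>.1 hPD.isUnit
  set x : ι → ℝ := A⁻¹ *ᵥ Pi.single j 1 with hx
  have hAx : A *ᵥ x = Pi.single j 1 := by
    rw [hx, Matrix.mulVec_mulVec, Matrix.mul_nonsing_inv A hdet, Matrix.one_mulVec]
  have hent : A⁻¹ i j = x i := by simp [hx, Matrix.mulVec_single]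
  have hkey : c * (x ⬝ᵥ x) ≤ x j := by
    have := RLSaux.rayleigh_lower hA hc x
    rwa [hAx, dotProduct_single, mul_one] at this
  have hxi : x i * x i ≤ x ⬝ᵥ x :=
    Finset.single_le_sum (f := fun k => x k * x k)
      (fun k _ => mul_self_nonneg _) (Finset.mem_univ i)
  have hxj : x j * x j ≤ x ⬝ᵥ x :=
    Finset.single_le_sum (f := fun k => x k * x k)
      (fun k _ => mul_self_nonneg _) (Finset.mem_univ j)
  have hxx : 0 ≤ x ⬝ᵥ x := Finset.sum_nonneg fun k _ => mul_self_nonneg _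
  rw [hent]
  have hsq : x i ^ 2 ≤ c⁻¹ ^ 2 := by
    rcases le_or_gt (x j) 0 with h | h
    · have h0 : x ⬝ᵥ x = 0 := le_antisymm (by nlinarith) hxx
      have h1 : x i * x i ≤ 0 := h0 ▸ hxi
      have h2 : x i = 0 := by nlinarith
      rw [h2]; norm_num; positivity
    · have hj : x j ≤ c⁻¹ := by
        have h1 : x j * x j ≤ x j / c := by
          calc x j * x j ≤ x ⬝ᵥ x := hxj
            _ ≤ x j / c := by rw [le_div_iff₀ hcpos]; linarith [hkey]
        have h2 := mul_le_mul_of_nonneg_left h1 hcpos.le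
        rw [mul_div_assoc', mul_comm c (x j), mul_div_assoc, div_self hcpos.ne', mul_one] at h2
        rw [show (c⁻¹ : ℝ) = 1 / c by ring, le_div_iff₀ hcpos]
        nlinarith
      have hcc : c * (c⁻¹ * c⁻¹) = c⁻¹ := by field_simp
      have h3 : x ⬝ᵥ x ≤ c⁻¹ * c⁻¹ :=
        le_of_mul_le_mul_left (by rw [hcc]; linarith [hkey, hj]) hcpos
      calc x i ^ 2 = x i * x i := sq (x i) ▸ rfl
        _ ≤ x ⬝ᵥ x := hxi
        _ ≤ c⁻¹ * c⁻¹ := h3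
        _ = c⁻¹ ^ 2 := (sq c⁻¹).symm
  have := Real.sqrt_le_sqrt hsq
  rwa [Real.sqrt_sq_eq_abs, Real.sqrt_sq (by positivity)] at this

lemma RLSaux.matrix_tendsto_of_entries {m n : Type*} [Fintype m] [Fintype n]
    {f : ℕ → Matrix m n ℝ} {A : Matrix m n ℝ}
    (h : ∀ i j, Tendsto (fun k => f k i j) atTop (nhds (A i j))) :
    Tendsto f atTop (nhds A) := by
  rw [show (nhds A : Filter (Matrix m n ℝ)) = nhds (A : m → n → ℝ) from rfl]
  exact tendsto_pi_nhds.2 fun i => tendsto_pi_nhds.2 fun j => h i j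

lemma RLSaux.tendsto_inv_gram {φ : ℕ → ι → ℝ}
    (h : Tendsto (fun k => lambdaMin (∑ i ∈ Finset.range k, vecMulVec (φ i) (φ i)))
      atTop atTop) :
    Tendsto (fun k => (∑ i ∈ Finset.range k, vecMulVec (φ i) (φ i))⁻¹) atTop (nhds 0) := by
  set S : ℕ → Matrix ι ι ℝ := fun k => ∑ i ∈ Finset.range k, vecMulVec (φ i) (φ i) with hS
  set lam : ℕ → ℝ := fun k => lambdaMin (S k) with hlam
  have hinv : Tendsto (fun k => (lam k)⁻¹) atTop (nhds 0) :=
    tendsto_inv_atTop_zero.comp h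
  have hev : ∀ᶠ k in atTop, 0 < lam k := h.eventually_gt_atTop 0
  apply RLSaux.matrix_tendsto_of_entries
  intro i j
  have hb : ∀ᶠ k in atTop, |(S k)⁻¹ i j - 0| ≤ (lam k)⁻¹ := by
    filter_upwards [hev] with k hk
    rw [sub_zero]
    exact RLSaux.inv_entry_bound (RLSaux.gram_posSemidef φ _) hk le_rfl i j
  have : Tendsto (fun k => (S k)⁻¹ i j - 0) atTop (nhds 0) := by
    apply squeeze_zero_norm' ?_ hinv
    simpa [Real.norm_eq_abs] using hb
  simpa using this

end Aux

section Alg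

lemma RLSaux.mulVec_inj {d r : ℕ} (M : Matrix (Fin d) (Fin r) ℝ) (hM : M.rank = r) :
    Function.Injective (M.mulVec) := by
  have h1 := LinearMap.finrank_range_add_finrank_ker M.mulVecLin
  rw [show Module.finrank ℝ (Fin r → ℝ) = r by simp] at h1
  rw [show Module.finrank ℝ (LinearMap.range M.mulVecLin) = r from hM] at h1
  have hker : LinearMap.ker M.mulVecLin = ⊥ :=
    Submodule.finrank_eq_zero.1 (by omega)
  exact LinearMap.ker_eq_bot.1 hker

lemma RLSaux.W_posDef {d r : ℕ} (M : Matrix (Fin d) (Fin r) ℝ) (hM : M.rank = r)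
    (P0 : Matrix (Fin d) (Fin d) ℝ) (hP0 : P0.PosDef) : (Mᵀ * P0 * M).PosDef := by
  have hinj := RLSaux.mulVec_inj M hM
  rw [Matrix.posDef_iff_dotProduct_mulVec]
  constructor
  · show (Mᵀ * P0 * M)ᴴ = Mᵀ * P0 * M
    have h0 : P0ᴴ = P0 := hP0.1
    rw [conjTranspose_mul, conjTranspose_mul, h0]
    simp [Matrix.mul_assoc]
  · intro x hx
    have hMx : M *ᵥ x ≠ 0 := by
      intro hc
      exact hx (hinj (by simpa using hc))
    have := hP0.dotProduct_mulVec_pos hMx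
    simp only [star_trivial] at this ⊢
    rwa [← Matrix.mulVec_mulVec, ← Matrix.mulVec_mulVec, Matrix.dotProduct_mulVec,
      Matrix.vecMul_transpose]

lemma RLSaux.woodbury {d r : ℕ}
    (M : Matrix (Fin d) (Fin r) ℝ) (P0 : Matrix (Fin d) (Fin d) ℝ)
    (Sb : Matrix (Fin r) (Fin r) ℝ)
    (hP0 : P0⁻¹ * P0 = 1)
    (hSb : Sb * Sb⁻¹ = 1)
    (hT : (Sb⁻¹ + Mᵀ * P0 * M) * (Sb⁻¹ + Mᵀ * P0 * M)⁻¹ = 1) :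
    (M * Sb * Mᵀ + P0⁻¹) *
      (P0 - P0 * M * (Sb⁻¹ + Mᵀ * P0 * M)⁻¹ * (Mᵀ * P0)) = 1 := by
  set B := Sb⁻¹
  set W := Mᵀ * P0 * M with hW
  set T := (B + W)⁻¹ with hTdef
  have e1 : Sb * (W * T) + T = Sb := by
    calc Sb * (W * T) + T = (Sb * W + 1) * T := by noncomm_ring
      _ = (Sb * W + Sb * B) * T := by rw [hSb]
      _ = Sb * ((B + W) * T) := by noncomm_ring
      _ = Sb := by rw [hT, mul_one]
  have hUV : (M * Sb * Mᵀ) * (P0 * M * T * (Mᵀ * P0)) = M * (Sb * (W * T)) * (Mᵀ * P0) := by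
    rw [hW]; simp only [Matrix.mul_assoc]
  have hPV : P0⁻¹ * (P0 * M * T * (Mᵀ * P0)) = M * T * (Mᵀ * P0) := by
    rw [show P0 * M * T * (Mᵀ * P0) = P0 * (M * T * (Mᵀ * P0)) by
      simp only [Matrix.mul_assoc], ← Matrix.mul_assoc, hP0, Matrix.one_mul]
  have hcomb : M * (Sb * (W * T)) * (Mᵀ * P0) + M * T * (Mᵀ * P0)
      = M * Sb * Mᵀ * P0 := by
    rw [← Matrix.add_mul, ← Matrix.mul_add, e1]
    simp only [Matrix.mul_assoc]
  calc (M * Sb * Mᵀ + P0⁻¹) * (P0 - P0 * M * T * (Mᵀ * P0))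
      = ((M * Sb * Mᵀ) * P0 - (M * Sb * Mᵀ) * (P0 * M * T * (Mᵀ * P0)))
        + (P0⁻¹ * P0 - P0⁻¹ * (P0 * M * T * (Mᵀ * P0))) := by
        simp only [Matrix.add_mul, Matrix.mul_sub]; abel
    _ = (M * Sb * Mᵀ * P0 - M * (Sb * (W * T)) * (Mᵀ * P0))
        + (1 - M * T * (Mᵀ * P0)) := by rw [hUV, hPV, hP0]
    _ = M * Sb * Mᵀ * P0
        - (M * (Sb * (W * T)) * (Mᵀ * P0) + M * T * (Mᵀ * P0)) + 1 := by abel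
    _ = 1 := by rw [hcomb, sub_self, zero_add]

lemma RLSaux.key_formula {p d r : ℕ}
    (M : Matrix (Fin d) (Fin r) ℝ) (P0 : Matrix (Fin d) (Fin d) ℝ) (hP0 : P0.PosDef)
    (θtrue θ0 : Matrix (Fin p) (Fin d) ℝ)
    (Sb : Matrix (Fin r) (Fin r) ℝ) (hSb : Sb.PosDef) (hW : (Mᵀ * P0 * M).PosDef) :
    (θtrue * (M * Sb * Mᵀ) + θ0 * P0⁻¹) * ((M * Sb * Mᵀ) + P0⁻¹)⁻¹
      = θ0 + (θtrue - θ0) * M * (Sb⁻¹ + Mᵀ * P0 * M)⁻¹ * Mᵀ * P0 := by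
  have hP0inv : P0⁻¹ * P0 = 1 :=
    Matrix.nonsing_inv_mul P0 (isUnit_iff_isUnit_det _ |>.1 hP0.isUnit)
  have hSbinv : Sb * Sb⁻¹ = 1 :=
    Matrix.mul_nonsing_inv Sb (isUnit_iff_isUnit_det _ |>.1 hSb.isUnit)
  have hBW : (Sb⁻¹ + Mᵀ * P0 * M).PosDef :=
    Matrix.PosDef.posSemidef_add hSb.inv.posSemidef hW
  have hT : (Sb⁻¹ + Mᵀ * P0 * M) * (Sb⁻¹ + Mᵀ * P0 * M)⁻¹ = 1 :=
    Matrix.mul_nonsing_inv _ (isUnit_iff_isUnit_det _ |>.1 hBW.isUnit)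
  set T := (Sb⁻¹ + Mᵀ * P0 * M)⁻¹ with hTdef
  set G := M * Sb * Mᵀ + P0⁻¹ with hGdef
  have hX : G * (P0 - P0 * M * T * (Mᵀ * P0)) = 1 :=
    RLSaux.woodbury M P0 Sb hP0inv hSbinv hT
  have hGinv : G⁻¹ = P0 - P0 * M * T * (Mᵀ * P0) := Matrix.inv_eq_right_inv hX
  have hnum : θtrue * (M * Sb * Mᵀ) + θ0 * P0⁻¹ = θtrue * G + (θ0 - θtrue) * P0⁻¹ := by
    rw [hGdef]
    simp only [Matrix.mul_add, Matrix.sub_mul]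
    abel
  have hPG : P0⁻¹ * G⁻¹ = 1 - M * (T * (Mᵀ * P0)) := by
    rw [hGinv, Matrix.mul_sub, hP0inv,
      show P0 * M * T * (Mᵀ * P0) = P0 * (M * (T * (Mᵀ * P0))) by
        simp only [Matrix.mul_assoc], ← Matrix.mul_assoc, hP0inv, Matrix.one_mul]
  calc (θtrue * (M * Sb * Mᵀ) + θ0 * P0⁻¹) * G⁻¹
      = θtrue * (G * G⁻¹) + (θ0 - θtrue) * (P0⁻¹ * G⁻¹) := by
        rw [hnum]
        simp only [Matrix.add_mul, Matrix.mul_assoc]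
    _ = θtrue * (1 : Matrix (Fin d) (Fin d) ℝ)
        + (θ0 - θtrue) * ((1 : Matrix (Fin d) (Fin d) ℝ) - M * (T * (Mᵀ * P0))) := by
        rw [hPG, show G * G⁻¹ = (1 : Matrix (Fin d) (Fin d) ℝ) by rw [hGinv]; exact hX]
    _ = θ0 + (θtrue - θ0) * M * T * Mᵀ * P0 := by
        simp only [Matrix.mul_one, Matrix.mul_sub, Matrix.sub_mul, Matrix.mul_assoc]
        abel

lemma RLSaux.diff_formula {p d r : ℕ}
    (M : Matrix (Fin d) (Fin r) ℝ) (P0 : Matrix (Fin d) (Fin d) ℝ)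
    (θtrue θ0 : Matrix (Fin p) (Fin d) ℝ)
    (Sb : Matrix (Fin r) (Fin r) ℝ) (hSb : Sb.PosDef) (hW : (Mᵀ * P0 * M).PosDef) :
    (θ0 + (θtrue - θ0) * M * (Sb⁻¹ + Mᵀ * P0 * M)⁻¹ * Mᵀ * P0)
      - (θ0 + (θtrue - θ0) * M * (Mᵀ * P0 * M)⁻¹ * Mᵀ * P0)
    = (θ0 - θtrue) * M
        * ((Sb⁻¹ + Mᵀ * P0 * M)⁻¹ * (Sb⁻¹ * (Mᵀ * P0 * M)⁻¹)) * Mᵀ * P0 := by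
  set B := Sb⁻¹ with hBdef
  set W := Mᵀ * P0 * M with hWdef
  set T := (B + W)⁻¹ with hTdef
  have hBW : (B + W).PosDef := Matrix.PosDef.posSemidef_add hSb.inv.posSemidef hW
  have h1 : T * (B + W) = 1 :=
    Matrix.nonsing_inv_mul _ (isUnit_iff_isUnit_det _ |>.1 hBW.isUnit)
  have h2 : W * W⁻¹ = 1 :=
    Matrix.mul_nonsing_inv _ (isUnit_iff_isUnit_det _ |>.1 hW.isUnit)
  have e0 : T * (B * W⁻¹) = W⁻¹ - T := by
    calc T * (B * W⁻¹) = T * (B + W) * W⁻¹ - T * (W * W⁻¹) := by noncomm_ring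
      _ = W⁻¹ - T := by rw [h1, h2, one_mul, mul_one]
  have e : W⁻¹ = T + T * (B * W⁻¹) := by rw [e0]; abel
  calc (θ0 + (θtrue - θ0) * M * T * Mᵀ * P0) - (θ0 + (θtrue - θ0) * M * W⁻¹ * Mᵀ * P0)
      = (θ0 + (θtrue - θ0) * M * T * Mᵀ * P0)
        - (θ0 + (θtrue - θ0) * M * (T + T * (B * W⁻¹)) * Mᵀ * P0) := by rw [← e]
    _ = (θ0 - θtrue) * M * (T * (B * W⁻¹)) * Mᵀ * P0 := by
        simp only [Matrix.mul_add, Matrix.add_mul, Matrix.sub_mul, Matrix.mul_sub,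
          Matrix.mul_assoc]
        abel

end Alg

lemma RLSaux.gram_transform {d r : ℕ} (M : Matrix (Fin d) (Fin r) ℝ)
    (u : ℕ → Fin r → ℝ) (k : ℕ) :
    ∑ i ∈ Finset.range k, vecMulVec (M *ᵥ u i) (M *ᵥ u i)
      = M * (∑ i ∈ Finset.range k, vecMulVec (u i) (u i)) * Mᵀ := by
  rw [Matrix.mul_sum, Matrix.sum_mul]
  apply Finset.sum_congr rfl; intro i _
  ext a b
  simp only [vecMulVec_apply, Matrix.mul_apply, mulVec, dotProduct, transpose_apply,
    Finset.sum_mul, Finset.mul_sum]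
  apply Finset.sum_congr rfl; intro x _
  apply Finset.sum_congr rfl; intro y _
  ring

/-- Theorem 4: in the higher-order identification setup
(y_k = θ_true φ_k, φ_k = M φ̄_k with M of full column rank), weak persistent
excitation of (φ̄_k) implies θ_k → θ* = θ0 + (θ_true - θ0) M (Mᵀ P0 M)⁻¹ Mᵀ P0;
persistent excitation additionally gives
lim k (θ_k - θ*) = (θ0 - θ_true) M W⁻¹ C⁻¹ W⁻¹ Mᵀ P0 with W = Mᵀ P0 M. -/
theorem rls_higher_order_convergence {p d r : ℕ}
    (M : Matrix (Fin d) (Fin r) ℝ) (hM : M.rank = r)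
    (P0 : Matrix (Fin d) (Fin d) ℝ) (hP0 : P0.PosDef)
    (θtrue θ0 : Matrix (Fin p) (Fin d) ℝ)
    (y : ℕ → Fin p → ℝ) (φ : ℕ → Fin d → ℝ) (φbar : ℕ → Fin r → ℝ)
    (hy : ∀ k, y k = θtrue *ᵥ φ k)
    (hφ : ∀ k, φ k = M *ᵥ φbar k)
    (θs : ℕ → Matrix (Fin p) (Fin d) ℝ)
    (hθ : ∀ k, θs k
      = (θtrue * (∑ i ∈ Finset.range k, vecMulVec (φ i) (φ i)) + θ0 * P0⁻¹)
        * ((∑ i ∈ Finset.range k, vecMulVec (φ i) (φ i)) + P0⁻¹)⁻¹) :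
    (WeaklyPE φbar →
      Tendsto θs atTop
        (nhds (θ0 + (θtrue - θ0) * M * (Mᵀ * P0 * M)⁻¹ * Mᵀ * P0))) ∧
    (∀ C : Matrix (Fin r) (Fin r) ℝ,
      WeaklyPE φbar →
      Tendsto (fun k : ℕ => (k : ℝ)⁻¹ • ∑ i ∈ Finset.range k, vecMulVec (φbar i) (φbar i))
        atTop (nhds C) →
      C.PosDef →
      Tendsto (fun k : ℕ =>
          (k : ℝ) • (θs k - (θ0 + (θtrue - θ0) * M * (Mᵀ * P0 * M)⁻¹ * Mᵀ * P0)))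
        atTop
        (nhds ((θ0 - θtrue) * M * (Mᵀ * P0 * M)⁻¹ * C⁻¹ * (Mᵀ * P0 * M)⁻¹ * Mᵀ * P0))) := by
  set Sb : ℕ → Matrix (Fin r) (Fin r) ℝ :=
    fun k => ∑ i ∈ Finset.range k, vecMulVec (φbar i) (φbar i) with hSbdef
  have hW : (Mᵀ * P0 * M).PosDef := RLSaux.W_posDef M hM P0 hP0
  set W := Mᵀ * P0 * M with hWdef
  -- key formula for θs
  have hθ' : ∀ k, (Sb k).PosDef →
      θs k = θ0 + (θtrue - θ0) * M * ((Sb k)⁻¹ + W)⁻¹ * Mᵀ * P0 := by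
    intro k hk
    rw [hθ k]
    have hconv : (∑ i ∈ Finset.range k, vecMulVec (φ i) (φ i)) = M * Sb k * Mᵀ := by
      simp only [hφ]
      exact RLSaux.gram_transform M φbar k
    rw [hconv]
    exact RLSaux.key_formula M P0 hP0 θtrue θ0 (Sb k) hk hW
  -- lambda divergence
  have hlam : WeaklyPE φbar → Tendsto (fun k => lambdaMin (Sb k)) atTop atTop := by
    intro h
    exact (tendsto_add_atTop_iff_nat (f := fun k => lambdaMin (Sb k)) 1).1 h
  have hPDev : WeaklyPE φbar → ∀ᶠ k in atTop, (Sb k).PosDef := by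
    intro h
    filter_upwards [(hlam h).eventually_gt_atTop 0] with k hk
    exact RLSaux.posDef_of_rayleigh (RLSaux.gram_posSemidef φbar _) hk le_rfl
  have hWinv_cont : ContinuousAt Inv.inv W := by
    apply continuousAt_matrix_inv
    rw [show (Ring.inverse : ℝ → ℝ) = Inv.inv from funext fun x => Ring.inverse_eq_inv x]
    exact continuousAt_inv₀ hW.det_pos.ne'
  have hTtend : WeaklyPE φbar →
      Tendsto (fun k => ((Sb k)⁻¹ + W)⁻¹) atTop (nhds W⁻¹) := by
    intro h
    have hBtend : Tendsto (fun k => (Sb k)⁻¹) atTop (nhds 0) :=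
      RLSaux.tendsto_inv_gram (hlam h)
    have h1 : Tendsto (fun k => (Sb k)⁻¹ + W) atTop (nhds W) := by
      have := hBtend.add (tendsto_const_nhds (x := W))
      simpa using this
    exact hWinv_cont.tendsto.comp h1
  constructor
  · -- Part 1
    intro h
    have hg : Continuous fun X : Matrix (Fin r) (Fin r) ℝ =>
        θ0 + (θtrue - θ0) * M * X * Mᵀ * P0 := by
      apply continuous_const.add
      exact (((continuous_const.matrix_mul continuous_id).matrix_mul
        continuous_const).matrix_mul continuous_const)
    have h3 := (hg.tendsto W⁻¹).comp (hTtend h)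
    exact Tendsto.congr'
      (by filter_upwards [hPDev h] with k hk; exact (hθ' k hk).symm) h3
  · -- Part 2
    intro C h hC hCpd
    have hCinv_cont : ContinuousAt Inv.inv C := by
      apply continuousAt_matrix_inv
      rw [show (Ring.inverse : ℝ → ℝ) = Inv.inv from funext fun x => Ring.inverse_eq_inv x]
      exact continuousAt_inv₀ hCpd.det_pos.ne'
    have hA : Tendsto (fun k : ℕ => ((k : ℝ)⁻¹ • Sb k)⁻¹) atTop (nhds C⁻¹) :=
      hCinv_cont.tendsto.comp hC
    have hg : Continuous fun X : Matrix (Fin r) (Fin r) ℝ × Matrix (Fin r) (Fin r) ℝ =>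
        (θ0 - θtrue) * M * (X.1 * (X.2 * W⁻¹)) * Mᵀ * P0 := by
      apply Continuous.matrix_mul _ continuous_const
      apply Continuous.matrix_mul _ continuous_const
      apply Continuous.matrix_mul continuous_const
      exact continuous_fst.matrix_mul (continuous_snd.matrix_mul continuous_const)
    have hpair : Tendsto (fun k : ℕ => (((Sb k)⁻¹ + W)⁻¹, ((k : ℝ)⁻¹ • Sb k)⁻¹))
        atTop (nhds (W⁻¹, C⁻¹)) := (hTtend h).prodMk_nhds hA
    have h3 := (hg.tendsto (W⁻¹, C⁻¹)).comp hpair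
    have hfinal : (θ0 - θtrue) * M * (W⁻¹ * (C⁻¹ * W⁻¹)) * Mᵀ * P0
        = (θ0 - θtrue) * M * W⁻¹ * C⁻¹ * W⁻¹ * Mᵀ * P0 := by
      simp only [Matrix.mul_assoc]
    rw [hfinal] at h3
    refine Tendsto.congr' ?_ h3
    filter_upwards [hPDev h, eventually_ge_atTop 1] with k hk hk1
    have hk0 : ((k : ℝ)) ≠ 0 := by positivity
    have hSbinv : Sb k * (Sb k)⁻¹ = 1 :=
      Matrix.mul_nonsing_inv _ (isUnit_iff_isUnit_det _ |>.1 hk.isUnit)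
    have hsmul_inv : ((k : ℝ)⁻¹ • Sb k)⁻¹ = (k : ℝ) • (Sb k)⁻¹ := by
      apply Matrix.inv_eq_right_inv
      rw [Matrix.smul_mul, Matrix.mul_smul, smul_smul, inv_mul_cancel₀ hk0, one_smul, hSbinv]
    have hdiff := RLSaux.diff_formula M P0 θtrue θ0 (Sb k) hk hW
    rw [← hWdef] at hdiff
    rw [hθ' k hk, hdiff]
    simp only [Function.comp_apply, hsmul_inv, Matrix.smul_mul, Matrix.mul_smul]
end
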